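/- For any two real symmetric n×n matrices X and Y, the vectors of eigenvalues in nonincreasing order satisfy |λ(X) − λ(Y)| ≤ |X − Y|, where the left norm is the Euclidean norm on ℝⁿ and the right norm is the Frobenius norm. -/

import Mathlib

/-!
Write `X = U diag(λ(X)) Uᵀ` and `Y = V diag(λ(Y)) Vᵀ` with `U`, `V` orthogonal. Then
`tr(XY) = ∑ᵢⱼ Sᵢⱼ λᵢ(X) λⱼ(Y)`, where `Sᵢⱼ = ((UᵀV)ᵢⱼ)²` is doubly stochastic.
By Birkhoff's theorem `S` is a convex combination of permutation matrices, and on each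
of them the rearrangement inequality bounds the sum by `∑ᵢ λᵢ(X) λᵢ(Y)`, both vectors
being sorted the same way. This is von Neumann's trace inequality
`tr(XY) ≤ ⟪λ(X), λ(Y)⟫`; expanding `‖X - Y‖² = tr X² - 2 tr(XY) + tr Y²` gives the claim.
-/

/-- The vector of eigenvalues of a symmetric matrix, listed in nonincreasing order
(junk value `0` for non-Hermitian matrices). -/
noncomputable def eigd {n : ℕ} (X : Matrix (Fin n) (Fin n) ℝ) : Fin n → ℝ :=
  if h : X.IsHermitian then
    fun i => h.eigenvalues (Tuple.sort h.eigenvalues i.rev)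
  else 0

open Matrix Finset

theorem Monovary.sum_sum_mul_mul_le_sum_mul_of_mem_doublyStochastic {ι R : Type*} [Fintype ι]
    [DecidableEq ι] [Field R] [LinearOrder R] [IsStrictOrderedRing R] {f g : ι → R}
    (hfg : Monovary f g) {S : Matrix ι ι R} (hS : S ∈ doublyStochastic R ι) :
    ∑ i, ∑ j, S i j * (f i * g j) ≤ ∑ i, f i * g i := by
  have hlin : IsLinearMap R fun M : Matrix ι ι R => ∑ i, ∑ j, M i j * (f i * g j) :=
    ⟨fun M N => by simp only [Matrix.add_apply, add_mul, sum_add_distrib],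
     fun c M => by simp only [Matrix.smul_apply, smul_eq_mul, mul_sum, mul_assoc]⟩
  rw [← SetLike.mem_coe, doublyStochastic_eq_convexHull_permMatrix] at hS
  refine convexHull_min ?_ (convex_halfSpace_le hlin _) hS
  rintro _ ⟨σ, rfl⟩
  simpa [Equiv.Perm.permMatrix, PEquiv.toMatrix_apply, Equiv.toPEquiv_apply]
    using hfg.sum_mul_comp_perm_le_sum_mul (σ := σ)

namespace Matrix

theorem hadamard_self_mem_doublyStochastic {ι R : Type*} [Fintype ι] [DecidableEq ι]
    [CommRing R] [StarRing R] [TrivialStar R] [LinearOrder R] [IsOrderedRing R]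
    {W : Matrix ι ι R} (hW : W ∈ unitaryGroup ι R) : W ⊙ W ∈ doublyStochastic R ι := by
  refine mem_doublyStochastic_iff_sum.2 ⟨fun i j => mul_self_nonneg _, fun i => ?_, fun j => ?_⟩
  · simpa [mul_apply] using congr_fun₂ (mem_unitaryGroup_iff.1 hW) i i
  · simpa [mul_apply] using congr_fun₂ (mem_unitaryGroup_iff'.1 hW) j j

theorem star_eq_transpose_of_trivial {ι R : Type*} [Star R] [TrivialStar R]
    (U : Matrix ι ι R) : star U = Uᵀ := by
  rw [star_eq_conjTranspose, conjTranspose_eq_transpose_of_trivial]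

theorem trace_diagonal_mul_mul_diagonal_mul_transpose {ι R : Type*} [Fintype ι]
    [DecidableEq ι] [CommSemiring R] (a b : ι → R) (W : Matrix ι ι R) :
    trace (diagonal a * W * diagonal b * Wᵀ) = ∑ i, ∑ j, (W ⊙ W) i j * (a i * b j) := by
  simp only [trace, diag_apply, mul_apply, diagonal_apply, transpose_apply, hadamard_apply,
    ite_mul, mul_ite, zero_mul, mul_zero, sum_ite_eq, sum_ite_eq', mem_univ, if_true]
  exact sum_congr rfl fun i _ => sum_congr rfl fun j _ => by ring

theorem trace_conj_diagonal_mul_conj_diagonal {ι R : Type*} [Fintype ι]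
    [DecidableEq ι] [CommSemiring R] (a b : ι → R) (U V : Matrix ι ι R) :
    trace (U * diagonal a * Uᵀ * (V * diagonal b * Vᵀ)) =
      ∑ i, ∑ j, ((Uᵀ * V) ⊙ (Uᵀ * V)) i j * (a i * b j) := by
  rw [← trace_diagonal_mul_mul_diagonal_mul_transpose]
  calc trace (U * diagonal a * Uᵀ * (V * diagonal b * Vᵀ))
      = trace (U * (diagonal a * Uᵀ * (V * diagonal b * Vᵀ))) := by simp only [Matrix.mul_assoc]
    _ = trace (diagonal a * (Uᵀ * V) * diagonal b * (Uᵀ * V)ᵀ) := by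
      rw [trace_mul_comm]
      simp only [transpose_mul, transpose_transpose, Matrix.mul_assoc]

end Matrix

theorem antitone_eigd {n : ℕ} (X : Matrix (Fin n) (Fin n) ℝ) : Antitone (eigd X) := by
  intro i j hij
  by_cases hX : X.IsHermitian
  · rw [eigd, dif_pos hX]
    exact Tuple.monotone_sort hX.eigenvalues (Fin.rev_le_rev.2 hij)
  · rw [eigd, dif_neg hX]
    exact le_rfl

namespace Matrix.IsHermitian

variable {n : ℕ} {X Y : Matrix (Fin n) (Fin n) ℝ}

theorem exists_unitary_eq_conj_diagonal_eigd (hX : X.IsHermitian) :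
    ∃ U ∈ unitaryGroup (Fin n) ℝ, X = U * diagonal (eigd X) * Uᵀ := by
  set σ : Equiv.Perm (Fin n) := Fin.revPerm.trans (Tuple.sort hX.eigenvalues)
  have heigd : eigd X = hX.eigenvalues ∘ σ := by
    ext i; rw [eigd, dif_pos hX]; rfl
  set U : Matrix (Fin n) (Fin n) ℝ := hX.eigenvectorUnitary.val
  have hU : U ∈ unitaryGroup (Fin n) ℝ := hX.eigenvectorUnitary.2
  have hXU : X = U * diagonal hX.eigenvalues * Uᵀ := by
    simpa [Unitary.conjStarAlgAut_apply, star_eq_conjTranspose] using hX.spectral_theorem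
  refine ⟨U.submatrix id σ, ?_, ?_⟩
  · rw [mem_unitaryGroup_iff, star_eq_conjTranspose, conjTranspose_submatrix, submatrix_mul_equiv,
      ← star_eq_conjTranspose, mem_unitaryGroup_iff.1 hU, submatrix_id_id]
  · rw [heigd, ← submatrix_diagonal_equiv, transpose_submatrix, submatrix_mul_equiv,
      submatrix_mul_equiv, submatrix_id_id, ← hXU]

theorem trace_mul_self_eq_sum_eigd_sq (hX : X.IsHermitian) :
    trace (X * X) = ∑ i, eigd X i ^ 2 := by
  obtain ⟨U, hU, hXU⟩ := hX.exists_unitary_eq_conj_diagonal_eigd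
  calc trace (X * X)
      = ∑ i, ∑ j, ((Uᵀ * U) ⊙ (Uᵀ * U)) i j * (eigd X i * eigd X j) := by
        rw [← trace_conj_diagonal_mul_conj_diagonal, ← hXU]
    _ = ∑ i, eigd X i ^ 2 := by
        rw [← star_eq_transpose_of_trivial, mem_unitaryGroup_iff'.1 hU]
        simp [hadamard_apply, one_apply, sq]

theorem trace_mul_le_sum_eigd_mul (hX : X.IsHermitian) (hY : Y.IsHermitian) :
    trace (X * Y) ≤ ∑ i, eigd X i * eigd Y i := by
  obtain ⟨U, hU, hXU⟩ := hX.exists_unitary_eq_conj_diagonal_eigd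
  obtain ⟨V, hV, hYV⟩ := hY.exists_unitary_eq_conj_diagonal_eigd
  calc trace (X * Y)
      = ∑ i, ∑ j, ((Uᵀ * V) ⊙ (Uᵀ * V)) i j * (eigd X i * eigd Y j) := by
        rw [← trace_conj_diagonal_mul_conj_diagonal, ← hXU, ← hYV]
    _ ≤ ∑ i, eigd X i * eigd Y i := by
        have hUV : Uᵀ * V ∈ unitaryGroup (Fin n) ℝ :=
          star_eq_transpose_of_trivial U ▸ mul_mem (Unitary.star_mem hU) hV
        exact ((antitone_eigd X).monovary (antitone_eigd Y))
          |>.sum_sum_mul_mul_le_sum_mul_of_mem_doublyStochastic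
            (hadamard_self_mem_doublyStochastic hUV)

end Matrix.IsHermitian

theorem statement6 {n : ℕ} (X Y : Matrix (Fin n) (Fin n) ℝ)
    (hX : X.IsHermitian) (hY : Y.IsHermitian) :
    Real.sqrt (∑ i, (eigd X i - eigd Y i) ^ 2)
      ≤ Real.sqrt (((X - Y) * (X - Y)).trace) := by
  apply Real.sqrt_le_sqrt
  have hXY := hX.trace_mul_le_sum_eigd_mul hY
  have hXX := hX.trace_mul_self_eq_sum_eigd_sq
  have hYY := hY.trace_mul_self_eq_sum_eigd_sq
  have hsq : ∑ i, (eigd X i - eigd Y i) ^ 2 =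
      ∑ i, eigd X i ^ 2 - 2 * ∑ i, eigd X i * eigd Y i + ∑ i, eigd Y i ^ 2 := by
    simp only [sub_sq, sum_add_distrib, sum_sub_distrib, mul_sum, mul_assoc]
  have htrace :
      ((X - Y) * (X - Y)).trace = trace (X * X) - 2 * trace (X * Y) + trace (Y * Y) := by
    rw [sub_mul, mul_sub, mul_sub, trace_sub, trace_sub, trace_sub, trace_mul_comm Y X]
    ring
  linarith
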